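/- Let P⃗₃ be the directed path on vertices {1,2,3} with arcs (1,2) and (2,3). Let O be a finite digraph such that (i) every 2-coloring c : V(O) → Fin 2 admits a monochromatic induced copy of P⃗₃, and (ii) for every color i ∈ Fin 3 there exists a P⃗₃-free 3-coloring of O in which exactly one vertex of O receives color i. Let D be any finite digraph, and let D' be obtained from D by adding, for each vertex v of D, a disjoint new copy O_v of O together with all arcs (u,v) for u a vertex of O_v. Then the underlying graph of D admits a proper 3-coloring if and only if D' admits a P⃗₃-free 3-coloring. -/

import Mathlib

/-- A simple digraph on vertex type `V`: no loops and no anti-parallel arcs. -/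
structure Digraph' (V : Type*) : Type _ where
  Adj : V → V → Prop
  loopless : ∀ v, ¬ Adj v v
  asymm : ∀ u v, Adj u v → ¬ Adj v u

/-- An induced copy of the digraph `F` in the digraph `D`, given by the embedding `φ`. -/
def IsInducedCopy {α β : Type*} (F : Digraph' α) (D : Digraph' β) (φ : α → β) : Prop :=
  Function.Injective φ ∧ ∀ u v : α, D.Adj (φ u) (φ v) ↔ F.Adj u v

/-- The image of `φ` is monochromatic under the coloring `c`. -/
def Monochromatic {α β : Type*} {k : ℕ} (c : β → Fin k) (φ : α → β) : Prop :=
  ∃ i : Fin k, ∀ u : α, c (φ u) = i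

/-- The coloring `c` of `D` is `F`-free: no induced copy of `F` in `D` is monochromatic. -/
def IsFFreeColoring {α β : Type*} (F : Digraph' α) (D : Digraph' β) {k : ℕ}
    (c : β → Fin k) : Prop :=
  ∀ φ : α → β, IsInducedCopy F D φ → ¬ Monochromatic c φ

/-- A digraph is acyclic if it contains no directed cycle. -/
def Digraph'.Acyclic {β : Type*} (D : Digraph' β) : Prop :=
  ∀ v : β, ¬ Relation.TransGen D.Adj v v

/-- The underlying simple graph of a digraph. -/
def Digraph'.underlying {V : Type*} (D : Digraph' V) : SimpleGraph V where
  Adj u v := D.Adj u v ∨ D.Adj v u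
  symm := ⟨fun _ _ h => Or.symm h⟩
  loopless := ⟨fun v h => h.elim (D.loopless v) (D.loopless v)⟩

/-- The directed path on three vertices `0, 1, 2` with arcs `(0, 1)` and `(1, 2)`
(vertices `1,2,3` of the statement are `0,1,2` here). -/
def P3dir : Digraph' (Fin 3) where
  Adj u v := (u = 0 ∧ v = 1) ∨ (u = 1 ∧ v = 2)
  loopless := by decide
  asymm := by decide

/-- The arc relation of the digraph `D'` obtained from `D` by adding, for each vertex `v` of
`D`, a disjoint copy of `O` together with all arcs `(u, v)` for `u` a vertex of that copy. -/
def attachMinusRel {V ω : Type*} (D : Digraph' V) (O : Digraph' ω) :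
    (V ⊕ (V × ω)) → (V ⊕ (V × ω)) → Prop
  | Sum.inl u, Sum.inl v => D.Adj u v
  | Sum.inl _, Sum.inr _ => False
  | Sum.inr (w, _), Sum.inl v => v = w
  | Sum.inr (v, u), Sum.inr (v', u') => v = v' ∧ O.Adj u u'

/-!
If `c` colors `D` properly, color each copy `O_v` by a `P⃗₃`-free coloring of `O`. An induced
`P⃗₃` of `D'` whose middle vertex lies in `O_v` lies entirely in `O_v` (its source would
otherwise also dominate `v`), and one whose middle vertex lies in `D` ends with an arc of `D`,
since no arc leaves `D`; so no such path is monochromatic. Conversely, a `P⃗₃`-free coloring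
restricts to a `P⃗₃`-free coloring of each `O_a`, which by (i) must use all three colors; so
for an arc `a → b` of `D`, some `w ∈ O_a` has the color of `a`, and `w → a → b` is an induced
`P⃗₃`, forcing `a` and `b` to get different colors.
-/

section InducedCopy

variable {α β γ : Type*} {F : Digraph' α} {G : Digraph' β} {D : Digraph' γ}

theorem IsInducedCopy.comp {ψ : α → β} {f : β → γ} (hψ : IsInducedCopy F G ψ)
    (hf : IsInducedCopy G D f) : IsInducedCopy F D (f ∘ ψ) :=
  ⟨hf.1.comp hψ.1, fun u v => (hf.2 _ _).trans (hψ.2 u v)⟩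

theorem IsInducedCopy.of_comp {ψ : α → β} {f : β → γ} (hf : IsInducedCopy G D f)
    (h : IsInducedCopy F D (f ∘ ψ)) : IsInducedCopy F G ψ :=
  ⟨h.1.of_comp, fun u v => (hf.2 _ _).symm.trans (h.2 u v)⟩

theorem IsFFreeColoring.comp {k : ℕ} {c : γ → Fin k} {f : β → γ} (hc : IsFFreeColoring F D c)
    (hf : IsInducedCopy G D f) : IsFFreeColoring F G (c ∘ f) :=
  fun ψ hψ => hc (f ∘ ψ) (hψ.comp hf)

/-- A coloring missing a color factors through one color fewer, so it inherits the
monochromatic copies forced on colorings with fewer colors. -/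
theorem IsFFreeColoring.surjective {m : ℕ} {c : β → Fin (m + 1)}
    (hG : ∀ d : β → Fin m, ∃ φ : α → β, IsInducedCopy F G φ ∧ Monochromatic d φ)
    (hc : IsFFreeColoring F G c) : Function.Surjective c := by
  by_contra hsurj
  obtain ⟨i, hi⟩ := not_forall.mp hsurj
  choose d hd using fun x => Fin.exists_succAbove_eq fun h : c x = i => hi ⟨x, h⟩
  obtain ⟨φ, hφ, j, hj⟩ := hG d
  exact hc φ hφ ⟨i.succAbove j, fun u => by rw [← hd, hj u]⟩

theorem isInducedCopy_P3dir_iff {φ : Fin 3 → γ} :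
    IsInducedCopy P3dir D φ ↔ D.Adj (φ 0) (φ 1) ∧ D.Adj (φ 1) (φ 2) ∧
      ¬ D.Adj (φ 0) (φ 2) ∧ ¬ D.Adj (φ 2) (φ 0) := by
  constructor
  · rintro ⟨-, h⟩
    simp [h, P3dir]
  · rintro ⟨h01, h12, h02, h20⟩
    have h10 := D.asymm _ _ h01
    have h21 := D.asymm _ _ h12
    refine ⟨fun x y hxy => ?_, fun x y => ?_⟩
    · by_contra hne
      fin_cases x <;> fin_cases y <;> simp_all [D.loopless]
    · fin_cases x <;> fin_cases y <;> simp [P3dir, h01, h12, h02, h20, h10, h21, D.loopless]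

end InducedCopy

section AttachMinus

variable {V ω : Type*} {D : Digraph' V} {O : Digraph' ω} {D' : Digraph' (V ⊕ (V × ω))}

theorem isInducedCopy_inr_mk (hD' : ∀ x y, D'.Adj x y ↔ attachMinusRel D O x y) (v : V) :
    IsInducedCopy O D' (fun u => Sum.inr (v, u)) :=
  ⟨fun u u' h => by simpa using h, fun u u' => by simp [hD', attachMinusRel]⟩

/-- The only arcs entering `O_v` come from `O_v`, and the source of an induced `P⃗₃` cannot
dominate `v`. -/
theorem exists_eq_inr_of_isInducedCopy_P3dir
    (hD' : ∀ x y, D'.Adj x y ↔ attachMinusRel D O x y) {φ : Fin 3 → V ⊕ (V × ω)}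
    (hφ : IsInducedCopy P3dir D' φ) {v : V} {u : ω} (h1 : φ 1 = Sum.inr (v, u)) :
    ∃ ψ : Fin 3 → ω, φ = fun j => Sum.inr (v, ψ j) := by
  obtain ⟨h01, h12, h02, -⟩ := isInducedCopy_P3dir_iff.mp hφ
  simp only [hD', h1] at h01 h12 h02
  rcases h0 : φ 0 with _ | ⟨v₀, u₀⟩ <;> rw [h0] at h01 h02
  · exact h01.elim
  rcases h2 : φ 2 with w | ⟨v₂, u₂⟩ <;> rw [h2] at h12 h02
  · cases h12
    exact (h02 h01.1.symm).elim
  · obtain ⟨rfl, -⟩ := h01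
    obtain ⟨rfl, -⟩ := h12
    refine ⟨![u₀, u, u₂], funext fun j => ?_⟩
    fin_cases j <;> simp [h0, h1, h2]

theorem isFFreeColoring_sumElim (hD' : ∀ x y, D'.Adj x y ↔ attachMinusRel D O x y)
    {c : V → Fin 3} (hc : ∀ u v, D.underlying.Adj u v → c u ≠ c v) {c₀ : ω → Fin 3}
    (hc₀ : IsFFreeColoring P3dir O c₀) :
    IsFFreeColoring P3dir D' (Sum.elim c (c₀ ∘ Prod.snd)) := by
  rintro φ hφ ⟨i, hi⟩
  rcases h1 : φ 1 with w | ⟨v, u⟩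
  · obtain ⟨-, h12, -⟩ := isInducedCopy_P3dir_iff.mp hφ
    rw [h1, hD'] at h12
    rcases h2 : φ 2 with w' | _ <;> rw [h2] at h12
    · have hw := hi 1
      have hw' := hi 2
      rw [h1] at hw
      rw [h2] at hw'
      exact hc w w' (Or.inl h12) (hw.trans hw'.symm)
    · exact h12.elim
  · obtain ⟨ψ, rfl⟩ := exists_eq_inr_of_isInducedCopy_P3dir hD' hφ h1
    exact hc₀ ψ ((isInducedCopy_inr_mk hD' v).of_comp hφ) ⟨i, hi⟩

theorem ne_of_isFFreeColoring_P3dir (hD' : ∀ x y, D'.Adj x y ↔ attachMinusRel D O x y)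
    (hO2 : ∀ c : ω → Fin 2, ∃ φ : Fin 3 → ω, IsInducedCopy P3dir O φ ∧ Monochromatic c φ)
    {c : V ⊕ (V × ω) → Fin 3} (hc : IsFFreeColoring P3dir D' c) {a b : V} (hab : D.Adj a b) :
    c (Sum.inl a) ≠ c (Sum.inl b) := by
  intro heq
  obtain ⟨w, hw⟩ := (hc.comp (isInducedCopy_inr_mk hD' a)).surjective hO2 (c (Sum.inl a))
  have hba : b ≠ a := fun h => D.loopless a (h ▸ hab)
  refine hc ![Sum.inr (a, w), Sum.inl a, Sum.inl b] ?_ ⟨c (Sum.inl a), ?_⟩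
  · exact isInducedCopy_P3dir_iff.mpr (by simp [hD', attachMinusRel, hab, hba])
  · intro j
    fin_cases j
    exacts [hw, rfl, heq.symm]

end AttachMinus

theorem statement7_general {V ω : Type*}
    (O : Digraph' ω)
    (hO2 : ∀ c : ω → Fin 2, ∃ φ : Fin 3 → ω, IsInducedCopy P3dir O φ ∧ Monochromatic c φ)
    (hO3 : ∀ i : Fin 3, ∃ c : ω → Fin 3,
      IsFFreeColoring P3dir O c ∧ ∃! x : ω, c x = i)
    (D : Digraph' V)
    (D' : Digraph' (V ⊕ (V × ω)))
    (hD' : ∀ x y, D'.Adj x y ↔ attachMinusRel D O x y) :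
    (∃ c : V → Fin 3, ∀ u v : V, D.underlying.Adj u v → c u ≠ c v) ↔
      (∃ c : (V ⊕ (V × ω)) → Fin 3, IsFFreeColoring P3dir D' c) := by
  constructor
  · rintro ⟨c, hc⟩
    obtain ⟨c₀, hc₀, -⟩ := hO3 0
    exact ⟨_, isFFreeColoring_sumElim hD' hc hc₀⟩
  · rintro ⟨c, hc⟩
    refine ⟨c ∘ Sum.inl, ?_⟩
    rintro u v (huv | hvu)
    · exact ne_of_isFFreeColoring_P3dir hD' hO2 hc huv
    · exact (ne_of_isFFreeColoring_P3dir hD' hO2 hc hvu).symm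

/-- Let `O` be a finite digraph such that every `2`-coloring of `O` has a monochromatic
induced copy of `P⃗₃`, and for every color `i` there is a `P⃗₃`-free `3`-coloring of `O` with
exactly one vertex of color `i`. Then the underlying graph of a finite digraph `D` is
properly `3`-colorable iff the digraph `D'`, obtained from `D` by attaching to each vertex
`v` a copy of `O` dominating `v`, admits a `P⃗₃`-free `3`-coloring. -/
theorem statement7 {V ω : Type*} [Fintype V] [Fintype ω]
    (O : Digraph' ω)
    (hO2 : ∀ c : ω → Fin 2, ∃ φ : Fin 3 → ω, IsInducedCopy P3dir O φ ∧ Monochromatic c φ)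
    (hO3 : ∀ i : Fin 3, ∃ c : ω → Fin 3,
      IsFFreeColoring P3dir O c ∧ ∃! x : ω, c x = i)
    (D : Digraph' V)
    (D' : Digraph' (V ⊕ (V × ω)))
    (hD' : ∀ x y, D'.Adj x y ↔ attachMinusRel D O x y) :
    (∃ c : V → Fin 3, ∀ u v : V, D.underlying.Adj u v → c u ≠ c v) ↔
      (∃ c : (V ⊕ (V × ω)) → Fin 3, IsFFreeColoring P3dir D' c) :=
  statement7_general O hO2 hO3 D D' hD'
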